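/- arXiv:2312.17152 — 2 statements merged into one kernel-verified Lean document; each statement's English description precedes it below -/
import Mathlib

section
/- Let Φ = (G, φ) be a complex unit gain graph on a connected simple graph G with m edges. Then the energy of Φ (the sum of absolute values of the eigenvalues of the Hermitian matrix A(Φ)) satisfies E(Φ) ≥ 2m/ρ(G), where ρ(G) is the spectral radius of the adjacency matrix of G. -/
open Matrix BigOperators

/-- `A` is the adjacency matrix of a complex unit gain graph on `G`. -/
def IsGainMatrix {n : ℕ} (G : SimpleGraph (Fin n)) (A : Matrix (Fin n) (Fin n) ℂ) : Prop :=
  A.IsHermitian ∧ (∀ i j, G.Adj i j → ‖A i j‖ = 1) ∧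
    ∀ i j, ¬ G.Adj i j → A i j = 0

theorem adjMatrix_isHermitian {n : ℕ} (G : SimpleGraph (Fin n)) [DecidableRel G.Adj] :
    (G.adjMatrix ℝ).IsHermitian := by
  ext i j
  simp [Matrix.conjTranspose_apply, SimpleGraph.adj_comm]

/-- The spectral radius of `G`: the largest eigenvalue of its 0-1 adjacency matrix. -/
noncomputable def specRad {n : ℕ} (G : SimpleGraph (Fin n)) [DecidableRel G.Adj] : ℝ :=
  ⨆ i, (adjMatrix_isHermitian G).eigenvalues i

/-- The energy of a Hermitian matrix: the sum of the absolute values of its eigenvalues. -/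
noncomputable def energy {n : ℕ} {A : Matrix (Fin n) (Fin n) ℂ} (hA : A.IsHermitian) : ℝ :=
  ∑ i, |hA.eigenvalues i|

/-! For a unit eigenvector `v` of `A` with eigenvalue `λ`, the entrywise modulus `|v|` satisfies
`|λ| |v| ≤ A(G) |v|` entrywise, because `‖A p q‖` is the `(p, q)` entry of the 0-1 adjacency matrix
`A(G)`; the Rayleigh quotient of `A(G)` at `|v|` then gives `|λ| ≤ ρ(G)`. On the other hand
`∑ λᵢ² = tr (A * A) = ∑ ‖A p q‖² = 2m`, so `2m ≤ ρ(G) ∑ |λᵢ| = ρ(G) E(Φ)`. -/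

namespace Matrix

variable {𝕜 n : Type*} [RCLike 𝕜] [Fintype n]

theorem star_dotProduct_mul_mul_star_mulVec (U D : Matrix n n 𝕜) (x : n → 𝕜) :
    star x ⬝ᵥ ((U * D * star U) *ᵥ x) = star (star U *ᵥ x) ⬝ᵥ (D *ᵥ (star U *ᵥ x)) := by
  rw [← mulVec_mulVec, ← mulVec_mulVec, dotProduct_mulVec, star_mulVec, star_eq_conjTranspose,
    conjTranspose_conjTranspose]

theorem re_star_dotProduct_diagonal_mulVec [DecidableEq n] (d : n → ℝ) (y : n → 𝕜) :
    RCLike.re (star y ⬝ᵥ (diagonal (RCLike.ofReal ∘ d) *ᵥ y)) = ∑ i, d i * ‖y i‖ ^ 2 := by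
  simp only [dotProduct, mulVec_diagonal, map_sum, Pi.star_apply, Function.comp_apply]
  refine Finset.sum_congr rfl fun i _ => ?_
  rw [mul_left_comm, RCLike.star_def, RCLike.conj_mul, RCLike.re_ofReal_mul]
  norm_cast

theorem re_star_dotProduct_self (y : n → 𝕜) : RCLike.re (star y ⬝ᵥ y) = ∑ i, ‖y i‖ ^ 2 := by
  simp only [dotProduct, map_sum, Pi.star_apply, RCLike.star_def, RCLike.conj_mul]
  norm_cast

theorem IsHermitian.re_star_dotProduct_mulVec_le [DecidableEq n] {A : Matrix n n 𝕜}
    (hA : A.IsHermitian) (x : n → 𝕜) :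
    RCLike.re (star x ⬝ᵥ (A *ᵥ x)) ≤ (⨆ i, hA.eigenvalues i) * RCLike.re (star x ⬝ᵥ x) := by
  set U : Matrix n n 𝕜 := ↑hA.eigenvectorUnitary
  have hA_eq : A = U * diagonal (RCLike.ofReal ∘ hA.eigenvalues) * star U := by
    simpa using hA.spectral_theorem
  have hxx : star x ⬝ᵥ x = star (star U *ᵥ x) ⬝ᵥ (star U *ᵥ x) := by
    have hU : U * star U = 1 := Unitary.mul_star_self_of_mem hA.eigenvectorUnitary.2
    simpa [hU] using star_dotProduct_mul_mul_star_mulVec U 1 x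
  conv_lhs => rw [hA_eq]
  rw [star_dotProduct_mul_mul_star_mulVec, hxx, re_star_dotProduct_diagonal_mulVec,
    re_star_dotProduct_self, Finset.mul_sum]
  exact Finset.sum_le_sum fun i _ => mul_le_mul_of_nonneg_right
    (le_ciSup (Set.finite_range _).bddAbove i) (sq_nonneg _)

theorem IsHermitian.trace_mul_self [DecidableEq n] {A : Matrix n n 𝕜} (hA : A.IsHermitian) :
    (A * A).trace = ∑ i, (hA.eigenvalues i : 𝕜) ^ 2 := by
  conv_lhs => rw [hA.spectral_theorem, ← map_mul, Unitary.conjStarAlgAut_apply, trace_mul_cycle,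
    Unitary.coe_star_mul_self, one_mul, diagonal_mul_diagonal, trace_diagonal]
  simp [sq]

theorem trace_conjTranspose_mul_self (A : Matrix n n 𝕜) :
    (Aᴴ * A).trace = ∑ p, ∑ q, (‖A p q‖ : 𝕜) ^ 2 := by
  simp only [trace, diag, mul_apply, conjTranspose_apply, RCLike.star_def, RCLike.conj_mul]
  exact Finset.sum_comm

theorem IsHermitian.sum_eigenvalues_sq [DecidableEq n] {A : Matrix n n 𝕜} (hA : A.IsHermitian) :
    ∑ i, hA.eigenvalues i ^ 2 = ∑ p, ∑ q, ‖A p q‖ ^ 2 := by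
  have h := hA.trace_mul_self
  nth_rw 1 [← hA.eq] at h
  rw [trace_conjTranspose_mul_self] at h
  exact_mod_cast h.symm

theorem IsHermitian.abs_eigenvalues_le_of_norm_le [DecidableEq n] {A : Matrix n n 𝕜}
    {B : Matrix n n ℝ} (hA : A.IsHermitian) (hB : B.IsHermitian)
    (hAB : ∀ p q, ‖A p q‖ ≤ B p q) (i : n) :
    |hA.eigenvalues i| ≤ ⨆ j, hB.eigenvalues j := by
  set v : n → 𝕜 := ⇑(hA.eigenvectorBasis i)
  set w : n → ℝ := fun p => ‖v p‖
  have hw : w ⬝ᵥ w = 1 := by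
    have h := EuclideanSpace.norm_sq_eq (hA.eigenvectorBasis i)
    rw [hA.eigenvectorBasis.norm_eq_one, one_pow] at h
    simpa [dotProduct, w, v, sq] using h.symm
  have hentry : ∀ p, |hA.eigenvalues i| * w p ≤ (B *ᵥ w) p := fun p =>
    calc |hA.eigenvalues i| * w p = ‖(A *ᵥ v) p‖ := by
          simp [v, w, hA.mulVec_eigenvectorBasis, norm_smul]
      _ ≤ ∑ q, ‖A p q‖ * w q := (norm_sum_le _ _).trans (by simp [w, norm_mul])
      _ ≤ (B *ᵥ w) p := Finset.sum_le_sum fun q _ =>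
          mul_le_mul_of_nonneg_right (hAB p q) (norm_nonneg _)
  calc |hA.eigenvalues i| = ∑ p, (|hA.eigenvalues i| * w p) * w p := by
        simp_rw [mul_assoc, ← Finset.mul_sum]
        rw [← dotProduct, hw, mul_one]
    _ ≤ w ⬝ᵥ (B *ᵥ w) := by
        rw [dotProduct_comm]
        exact Finset.sum_le_sum fun p _ => mul_le_mul_of_nonneg_right (hentry p) (norm_nonneg _)
    _ ≤ ⨆ j, hB.eigenvalues j := by
        simpa [hw] using hB.re_star_dotProduct_mulVec_le w

end Matrix

namespace IsGainMatrix

variable {n : ℕ} {G : SimpleGraph (Fin n)} [DecidableRel G.Adj] {A : Matrix (Fin n) (Fin n) ℂ}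

theorem norm_apply (hA : IsGainMatrix G A) (p q : Fin n) : ‖A p q‖ = G.adjMatrix ℝ p q := by
  by_cases h : G.Adj p q <;> simp [h, hA.2.1, hA.2.2]

theorem sum_eigenvalues_sq (hA : IsGainMatrix G A) :
    ∑ i, hA.1.eigenvalues i ^ 2 = 2 * G.edgeFinset.card := by
  have hsq : ∀ p q, ‖A p q‖ ^ 2 = G.adjMatrix ℝ p q := fun p q => by
    by_cases h : G.Adj p q <;> simp [hA.norm_apply, h]
  simp_rw [hA.1.sum_eigenvalues_sq, hsq]
  have hdeg : ∀ p, ∑ q, G.adjMatrix ℝ p q = G.degree p := fun p => by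
    simpa [mulVec, dotProduct] using G.adjMatrix_mulVec_const_apply (a := (1 : ℝ)) (v := p)
  simp_rw [hdeg]
  exact_mod_cast G.sum_degrees_eq_twice_card_edges

theorem abs_eigenvalues_le_specRad (hA : IsGainMatrix G A) (i : Fin n) :
    |hA.1.eigenvalues i| ≤ specRad G :=
  hA.1.abs_eigenvalues_le_of_norm_le (adjMatrix_isHermitian G)
    (fun p q => (hA.norm_apply p q).le) i

end IsGainMatrix

theorem specRad_nonneg {n : ℕ} (G : SimpleGraph (Fin n)) [DecidableRel G.Adj] : 0 ≤ specRad G := by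
  rcases isEmpty_or_nonempty (Fin n) with h | ⟨⟨p⟩⟩
  · -- an empty supremum of reals is `0`
    simp [specRad]
  · -- the Rayleigh quotient at a basis vector is a diagonal entry of `A(G)`, which vanishes
    simpa [specRad] using (adjMatrix_isHermitian G).re_star_dotProduct_mulVec_le (Pi.single p 1)

theorem energy_ge_two_mul_card_edges_div_specRad_general {n : ℕ} (G : SimpleGraph (Fin n))
    [DecidableRel G.Adj] (A : Matrix (Fin n) (Fin n) ℂ) (hA : IsGainMatrix G A) :
    (2 * G.edgeFinset.card : ℝ) / specRad G ≤ energy hA.1 := by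
  have key : (2 * G.edgeFinset.card : ℝ) ≤ energy hA.1 * specRad G :=
    calc (2 * G.edgeFinset.card : ℝ) = ∑ i, |hA.1.eigenvalues i| * |hA.1.eigenvalues i| := by
          simp_rw [← hA.sum_eigenvalues_sq, ← sq, sq_abs]
      _ ≤ ∑ i, |hA.1.eigenvalues i| * specRad G := Finset.sum_le_sum fun i _ =>
          mul_le_mul_of_nonneg_left (hA.abs_eigenvalues_le_specRad i) (abs_nonneg _)
      _ = energy hA.1 * specRad G := (Finset.sum_mul _ _ _).symm
  exact div_le_of_le_mul₀ (specRad_nonneg G) (Finset.sum_nonneg fun i _ => abs_nonneg _) key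

theorem energy_ge_two_mul_card_edges_div_specRad {n : ℕ} (G : SimpleGraph (Fin n))
    [DecidableRel G.Adj] (A : Matrix (Fin n) (Fin n) ℂ) (hA : IsGainMatrix G A)
    (hconn : G.Connected) :
    (2 * G.edgeFinset.card : ℝ) / specRad G ≤ energy hA.1 :=
  energy_ge_two_mul_card_edges_div_specRad_general G A hA
end

section
/- Every finite simple graph G with matching number μ can be edge-decomposed into μ edge-disjoint subgraphs L_1, …, L_μ whose union is G, such that each L_j is isomorphic either to a double star T_{p,q} (an edge uv with p pendant vertices attached to u and q pendant vertices attached to v) or to a graph G_{p,q,1} (a triangle on a base edge uv with one extra common apex, plus p pendant vertices at u and q pendant vertices at v). -/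
open BigOperators

/-- The matching number of `G`. -/
noncomputable def matchingNumber {n : ℕ} (G : SimpleGraph (Fin n)) : ℕ :=
  sSup {k | ∃ M : Finset (Sym2 (Fin n)), ↑M ⊆ G.edgeSet ∧
    (∀ e ∈ M, ∀ f ∈ M, e ≠ f → ∀ v : Fin n, ¬(v ∈ e ∧ v ∈ f)) ∧ M.card = k}

/-- `H` is (up to isolated vertices) a double star `T_{p,q}`: an edge `uv`, all
edges incident to `u` or `v`, and `u, v` have no common neighbour. -/
def IsDoubleStar {n : ℕ} (H : SimpleGraph (Fin n)) : Prop :=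
  ∃ u v : Fin n, H.Adj u v ∧ (∀ e ∈ H.edgeSet, u ∈ e ∨ v ∈ e) ∧
    ¬ ∃ w : Fin n, H.Adj u w ∧ H.Adj v w

/-- `H` is (up to isolated vertices) a graph `G_{p,q,1}`: a triangle `u v w` on the
base edge `uv`, all edges incident to `u` or `v`, and `w` is the unique common
neighbour of `u` and `v`. -/
def IsTriangleStar {n : ℕ} (H : SimpleGraph (Fin n)) : Prop :=
  ∃ u v w : Fin n, H.Adj u v ∧ H.Adj u w ∧ H.Adj v w ∧
    (∀ e ∈ H.edgeSet, u ∈ e ∨ v ∈ e) ∧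
    ∀ x : Fin n, H.Adj u x → H.Adj v x → x = w

/-!
Fix a maximum matching `{uⱼvⱼ}`. Its unmatched vertices form an independent set, and the ends of
each matching edge have at most one unmatched common neighbour, since two of them `w ≠ w'` would
let us trade `uⱼvⱼ` for `uⱼw` and `vⱼw'`. Give every edge to a matching edge owning one of its
ends, breaking ties between two matched ends by comparing indices and sides so that a matched
vertex never sends both of its edges towards `uⱼ` and `vⱼ` to the `j`-th class. The `j`-th class
then consists of `uⱼvⱼ` and edges at `uⱼ` or `vⱼ`, and `uⱼ`, `vⱼ` have at most one common
neighbour in it: it is a `T_{p,q}` or a `G_{p,q,1}`.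
-/

namespace SimpleGraph

variable {V : Type*} {G : SimpleGraph V} {M : Finset (Sym2 V)}

def IsEdgeMatching (G : SimpleGraph V) (M : Finset (Sym2 V)) : Prop :=
  ↑M ⊆ G.edgeSet ∧ (M : Set (Sym2 V)).Pairwise fun e f => ∀ v, ¬(v ∈ e ∧ v ∈ f)

namespace IsEdgeMatching

theorem subset {M' : Finset (Sym2 V)} (hM : G.IsEdgeMatching M) (h : M' ⊆ M) :
    G.IsEdgeMatching M' :=
  ⟨(Finset.coe_subset.2 h).trans hM.1, hM.2.mono (Finset.coe_subset.2 h)⟩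

theorem notMem_of_mem_of_ne (hM : G.IsEdgeMatching M) {e f : Sym2 V} {v : V}
    (he : e ∈ M) (hf : f ∈ M) (hne : f ≠ e) (hv : v ∈ e) : v ∉ f :=
  fun hvf => hM.2 hf he hne v ⟨hvf, hv⟩

theorem exists_injective_ends {μ : ℕ} (hM : G.IsEdgeMatching M)
    (hμ : M.card = μ) :
    ∃ ends : Fin μ × Bool → V, Function.Injective ends ∧
      (∀ j, s(ends (j, true), ends (j, false)) ∈ M) ∧
      Set.range ends = {x | ∃ e ∈ M, x ∈ e} := by
  set E : Fin μ → Sym2 V := fun j => (Finset.equivFinOfCardEq hμ).symm j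
  have hEM : ∀ j, E j ∈ M := fun j => ((Finset.equivFinOfCardEq hμ).symm j).2
  have hEinj : Function.Injective E := Subtype.val_injective.comp (Equiv.injective _)
  have hEsurj : ∀ e ∈ M, ∃ j, E j = e := fun e he =>
    ⟨Finset.equivFinOfCardEq hμ ⟨e, he⟩, by simp [E]⟩
  have hout : ∀ j, E j = s((E j).out.1, (E j).out.2) := fun j => (E j).out_eq.symm
  set ends : Fin μ × Bool → V := fun p => if p.2 then (E p.1).out.1 else (E p.1).out.2
  have hmem : ∀ p, ends p ∈ E p.1 := fun
    | (_, true) => Sym2.out_fst_mem _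
    | (_, false) => Sym2.out_snd_mem _
  refine ⟨ends, ?_, fun j => hout j ▸ hEM j, ?_⟩
  · rintro ⟨j, b⟩ ⟨k, c⟩ h
    obtain rfl : j = k := hEinj <| by_contra fun hjk =>
      hM.2 (hEM j) (hEM k) hjk (ends (j, b)) ⟨hmem _, h ▸ hmem _⟩
    have hne : (E j).out.1 ≠ (E j).out.2 := fun heq =>
      G.not_isDiag_of_mem_edgeSet (hM.1 (hEM j)) (by rw [hout j, Sym2.mk_isDiag_iff]; exact heq)
    cases b <;> cases c
    exacts [rfl, absurd h.symm hne, absurd h hne, rfl]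
  · ext x
    refine ⟨fun ⟨p, hp⟩ => ⟨E p.1, hEM p.1, hp ▸ hmem p⟩, fun ⟨e, he, hxe⟩ => ?_⟩
    obtain ⟨j, rfl⟩ := hEsurj e he
    rw [hout j, Sym2.mem_iff] at hxe
    rcases hxe with rfl | rfl
    exacts [⟨(j, true), rfl⟩, ⟨(j, false), rfl⟩]

variable [DecidableEq V]

theorem insert (hM : G.IsEdgeMatching M) {x y : V} (hxy : G.Adj x y)
    (hx : ∀ e ∈ M, x ∉ e) (hy : ∀ e ∈ M, y ∉ e) : G.IsEdgeMatching (insert s(x, y) M) := by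
  have hdisj : ∀ e ∈ M, ∀ v, ¬(v ∈ s(x, y) ∧ v ∈ e) := by
    rintro e he v ⟨hv, hve⟩
    rcases Sym2.mem_iff.1 hv with rfl | rfl
    exacts [hx e he hve, hy e he hve]
  refine ⟨?_, ?_⟩
  · rw [Finset.coe_insert]
    exact Set.insert_subset hxy hM.1
  · rw [Finset.coe_insert, Set.pairwise_insert]
    exact ⟨hM.2, fun e he _ => ⟨hdisj e he, fun v hv => hdisj e he v hv.symm⟩⟩

variable (hM : G.IsEdgeMatching M) (hmax : ∀ M', G.IsEdgeMatching M' → M'.card ≤ M.card)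
include hM hmax

theorem exists_mem_of_adj {x y : V} (hxy : G.Adj x y) :
    (∃ e ∈ M, x ∈ e) ∨ (∃ e ∈ M, y ∈ e) := by
  by_contra! h
  have hnew : s(x, y) ∉ M := fun hxyM => h.1 _ hxyM (Sym2.mem_mk_left x y)
  have := hmax _ (hM.insert hxy h.1 h.2)
  rw [Finset.card_insert_of_notMem hnew] at this
  omega

theorem subsingleton_commonNeighbors {a b : V} (hab : s(a, b) ∈ M) :
    {w ∈ G.commonNeighbors a b | ∀ e ∈ M, w ∉ e}.Subsingleton := by
  rintro w ⟨hw, hwM⟩ w' ⟨hw', hw'M⟩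
  rw [mem_commonNeighbors] at hw hw'
  by_contra hne
  -- Trading `ab` for the two edges `aw` and `bw'` would enlarge the matching.
  set A := M.erase s(a, b)
  have hA : G.IsEdgeMatching A := hM.subset (Finset.erase_subset _ _)
  have hfree : ∀ v ∈ s(a, b), ∀ e ∈ A, v ∉ e := fun v hv e he =>
    hM.notMem_of_mem_of_ne hab (Finset.mem_of_mem_erase he) (Finset.ne_of_mem_erase he) hv
  have hwA : ∀ e ∈ A, w ∉ e := fun e he => hwM e (Finset.mem_of_mem_erase he)
  have hw'A : ∀ e ∈ A, w' ∉ e := fun e he => hw'M e (Finset.mem_of_mem_erase he)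
  have hB : G.IsEdgeMatching (Insert.insert s(b, w') A) := hA.insert hw'.2 (hfree b (Sym2.mem_mk_right a b)) hw'A
  have haB : ∀ e ∈ Insert.insert s(b, w') A, a ∉ e := by
    refine Finset.forall_mem_insert _ _ _ |>.2 ⟨?_, hfree a (Sym2.mem_mk_left a b)⟩
    simp [(hM.1 hab : G.Adj a b).ne, hw'.1.ne]
  have hwB : ∀ e ∈ Insert.insert s(b, w') A, w ∉ e := by
    refine Finset.forall_mem_insert _ _ _ |>.2 ⟨?_, hwA⟩
    simp [hne, hw.2.ne']
  have hC := hB.insert hw.1 haB hwB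
  have hcard := hmax _ hC
  rw [Finset.card_insert_of_notMem (fun h => hwB _ h (Sym2.mem_mk_right a w)),
    Finset.card_insert_of_notMem (fun h => hw'A _ h (Sym2.mem_mk_right b w')),
    Finset.card_erase_of_mem hab] at hcard
  have := Finset.card_pos.2 ⟨_, hab⟩
  omega

end IsEdgeMatching

end SimpleGraph

theorem Function.Injective.partialInv_eq_none_iff {α β : Type*} {f : α → β}
    (hf : Function.Injective f) {b : β} : Function.partialInv f b = none ↔ b ∉ Set.range f := by
  simp [Option.eq_none_iff_forall_ne_some, hf.isPartialInv _ b]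

section Owner

variable {ι : Type*} [LinearOrder ι]

/-- The label `(k, s)` stands for the endpoint on side `s` of the `k`-th matching edge. Comparing
sides ensures that a vertex outside the `j`-th matching edge never has both of its edges to the
ends of that matching edge assigned to `j`. -/
def pairOwner (p q : ι × Bool) : ι :=
  if p.2 = q.2 then max p.1 q.1 else min p.1 q.1

theorem pairOwner_comm (p q : ι × Bool) : pairOwner p q = pairOwner q p := by
  simp only [pairOwner, eq_comm (a := p.2), max_comm, min_comm]

theorem pairOwner_eq_or_eq (p q : ι × Bool) : pairOwner p q = p.1 ∨ pairOwner p q = q.1 := by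
  unfold pairOwner
  split_ifs
  exacts [max_choice _ _, min_choice _ _]

theorem fst_eq_of_pairOwner_eq {j : ι} {p : ι × Bool} (htrue : pairOwner (j, true) p = j)
    (hfalse : pairOwner (j, false) p = j) : p.1 = j := by
  obtain ⟨k, b⟩ := p
  cases b <;> simp [pairOwner] at htrue hfalse
  exacts [le_antisymm hfalse htrue, le_antisymm htrue hfalse]

def labelOwner : Option (ι × Bool) → Option (ι × Bool) → Option ι
  | some p, some q => some (pairOwner p q)
  | some p, none => some p.1
  | none, some q => some q.1
  | none, none => none

theorem labelOwner_comm (a b : Option (ι × Bool)) : labelOwner a b = labelOwner b a := by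
  cases a <;> cases b <;> simp [labelOwner, pairOwner_comm]

theorem labelOwner_eq_none_iff {a b : Option (ι × Bool)} :
    labelOwner a b = none ↔ a = none ∧ b = none := by
  cases a <;> cases b <;> simp [labelOwner]

theorem exists_eq_some_of_labelOwner_eq_some {a b : Option (ι × Bool)} {j : ι}
    (h : labelOwner a b = some j) : (∃ s, a = some (j, s)) ∨ ∃ s, b = some (j, s) := by
  cases a with
  | none =>
    cases b <;> simp only [labelOwner, reduceCtorEq, Option.some.injEq] at h
    exact Or.inr ⟨_, by rw [← h]⟩
  | some p =>
    cases b <;> simp only [labelOwner, Option.some.injEq] at h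
    · exact Or.inl ⟨_, by rw [← h]⟩
    · rcases pairOwner_eq_or_eq p _ with hp | hq
      · exact Or.inl ⟨p.2, by rw [← h, hp]⟩
      · exact Or.inr ⟨_, by rw [← h, hq]⟩

end Owner

namespace SimpleGraph

variable {V ι : Type*} [LinearOrder ι] {G : SimpleGraph V} {ends : ι × Bool → V}

/-- `ends` enumerates the endpoints of the matching edges; an edge with no matched endpoint gets
`none`. -/
noncomputable def edgeOwner (ends : ι × Bool → V) : Sym2 V → Option ι :=
  Sym2.lift ⟨fun x y => labelOwner (Function.partialInv ends x) (Function.partialInv ends y),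
    fun _ _ => labelOwner_comm _ _⟩

@[simp]
theorem edgeOwner_mk (x y : V) :
    edgeOwner ends s(x, y) =
      labelOwner (Function.partialInv ends x) (Function.partialInv ends y) :=
  rfl

noncomputable def ownedSubgraph (G : SimpleGraph V) (ends : ι × Bool → V) (j : ι) :
    SimpleGraph V :=
  G.deleteEdges {e | edgeOwner ends e ≠ some j}

theorem ownedSubgraph_adj {j : ι} {x y : V} :
    (G.ownedSubgraph ends j).Adj x y ↔ G.Adj x y ∧ edgeOwner ends s(x, y) = some j := by
  simp [ownedSubgraph]

theorem mem_edgeSet_ownedSubgraph {j : ι} {e : Sym2 V} :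
    e ∈ (G.ownedSubgraph ends j).edgeSet ↔ e ∈ G.edgeSet ∧ edgeOwner ends e = some j := by
  simp [ownedSubgraph]

theorem ownedSubgraph_le (j : ι) : G.ownedSubgraph ends j ≤ G :=
  deleteEdges_le _

theorem disjoint_edgeSet_ownedSubgraph {i j : ι} (hij : i ≠ j) :
    Disjoint (G.ownedSubgraph ends i).edgeSet (G.ownedSubgraph ends j).edgeSet :=
  Set.disjoint_left.2 fun _ hi hj => hij <| Option.some_injective _ <|
    (mem_edgeSet_ownedSubgraph.1 hi).2.symm.trans (mem_edgeSet_ownedSubgraph.1 hj).2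

variable (hends : Function.Injective ends)
include hends

theorem iUnion_edgeSet_ownedSubgraph
    (hcover : ∀ x y, G.Adj x y → x ∈ Set.range ends ∨ y ∈ Set.range ends) :
    ⋃ j, (G.ownedSubgraph ends j).edgeSet = G.edgeSet := by
  refine Set.iUnion_subset (fun j => edgeSet_mono (ownedSubgraph_le j)) |>.antisymm ?_
  intro e he
  induction e using Sym2.ind with
  | h x y =>
    obtain ⟨j, hj⟩ : ∃ j, edgeOwner ends s(x, y) = some j := Option.ne_none_iff_exists'.1 <| by
      rw [edgeOwner_mk, Ne, labelOwner_eq_none_iff, hends.partialInv_eq_none_iff,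
        hends.partialInv_eq_none_iff]
      rintro ⟨hx, hy⟩
      exact (hcover x y he).elim hx hy
    exact Set.mem_iUnion.2 ⟨j, mem_edgeSet_ownedSubgraph.2 ⟨he, hj⟩⟩

theorem ownedSubgraph_adj_ends {j : ι} (hadj : G.Adj (ends (j, true)) (ends (j, false))) :
    (G.ownedSubgraph ends j).Adj (ends (j, true)) (ends (j, false)) :=
  ownedSubgraph_adj.2 ⟨hadj, by simp [Function.partialInv_left hends, labelOwner, pairOwner]⟩

theorem ends_mem_of_mem_edgeSet_ownedSubgraph {j : ι} {e : Sym2 V}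
    (he : e ∈ (G.ownedSubgraph ends j).edgeSet) : ends (j, true) ∈ e ∨ ends (j, false) ∈ e := by
  induction e using Sym2.ind with
  | h x y =>
    rcases exists_eq_some_of_labelOwner_eq_some (mem_edgeSet_ownedSubgraph.1 he).2
      with ⟨b, hb⟩ | ⟨b, hb⟩ <;>
    · rw [hends.isPartialInv] at hb
      cases b <;> simp [hb]

theorem commonNeighbors_ownedSubgraph_subset (j : ι) :
    (G.ownedSubgraph ends j).commonNeighbors (ends (j, true)) (ends (j, false)) ⊆
      {w ∈ G.commonNeighbors (ends (j, true)) (ends (j, false)) | w ∉ Set.range ends} := by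
  intro w hw
  simp only [mem_commonNeighbors, ownedSubgraph_adj, edgeOwner_mk,
    Function.partialInv_left hends] at hw
  obtain ⟨⟨hu, hju⟩, hv, hjv⟩ := hw
  refine ⟨(G.mem_commonNeighbors).2 ⟨hu, hv⟩, ?_⟩
  rintro ⟨⟨k, b⟩, rfl⟩
  simp only [Function.partialInv_left hends, labelOwner, Option.some.injEq] at hju hjv
  obtain rfl : k = j := fst_eq_of_pairOwner_eq hju hjv
  cases b
  exacts [hv.ne rfl, hu.ne rfl]

end SimpleGraph

open SimpleGraph

theorem exists_isEdgeMatching_card_eq_matchingNumber {n : ℕ} (G : SimpleGraph (Fin n)) :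
    ∃ M, G.IsEdgeMatching M ∧ M.card = matchingNumber G ∧
      ∀ M', G.IsEdgeMatching M' → M'.card ≤ M.card := by
  set S := {k | ∃ M, G.IsEdgeMatching M ∧ M.card = k}
  have hS : matchingNumber G = sSup S := by
    simp only [S, matchingNumber, IsEdgeMatching, and_assoc]
    rfl
  have hbdd : BddAbove S := ⟨Fintype.card (Sym2 (Fin n)), fun _ ⟨M, _, hM⟩ => hM ▸ M.card_le_univ⟩
  obtain ⟨M, hM, hcard⟩ : matchingNumber G ∈ S :=
    hS ▸ Nat.sSup_mem ⟨0, ∅, ⟨by simp, by simp⟩, rfl⟩ hbdd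
  exact ⟨M, hM, hcard, fun M' hM' => hcard ▸ hS ▸ le_csSup hbdd ⟨M', hM', rfl⟩⟩

theorem isDoubleStar_or_isTriangleStar {n : ℕ} {H : SimpleGraph (Fin n)} {u v : Fin n}
    (huv : H.Adj u v) (hcover : ∀ e ∈ H.edgeSet, u ∈ e ∨ v ∈ e)
    (hcommon : (H.commonNeighbors u v).Subsingleton) : IsDoubleStar H ∨ IsTriangleStar H := by
  by_cases h : ∃ w, H.Adj u w ∧ H.Adj v w
  · obtain ⟨w, huw, hvw⟩ := h
    exact Or.inr ⟨u, v, w, huv, huw, hvw, hcover, fun x hux hvx => hcommon ⟨hux, hvx⟩ ⟨huw, hvw⟩⟩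
  · exact Or.inl ⟨u, v, huv, hcover, h⟩

/-- Every graph with matching number `μ` decomposes into `μ` edge-disjoint
subgraphs, each of which is a double star `T_{p,q}` or a triangle star `G_{p,q,1}`. -/
theorem graph_decomposition {n : ℕ} (G : SimpleGraph (Fin n)) :
    ∃ L : Fin (matchingNumber G) → SimpleGraph (Fin n),
      (∀ j, L j ≤ G) ∧
      (∀ i j, i ≠ j → Disjoint ((L i).edgeSet) ((L j).edgeSet)) ∧
      (⋃ j, (L j).edgeSet) = G.edgeSet ∧
      ∀ j, IsDoubleStar (L j) ∨ IsTriangleStar (L j) := by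
  obtain ⟨M, hM, hcard, hmax⟩ := exists_isEdgeMatching_card_eq_matchingNumber G
  obtain ⟨ends, hends, hendsM, hrange⟩ := hM.exists_injective_ends hcard
  have hcover : ∀ x y, G.Adj x y → x ∈ Set.range ends ∨ y ∈ Set.range ends := by
    rw [hrange]
    exact fun x y => hM.exists_mem_of_adj hmax
  have hcommon : ∀ j, {w ∈ G.commonNeighbors (ends (j, true)) (ends (j, false)) |
      w ∉ Set.range ends}.Subsingleton := by
    simpa [hrange] using fun j => hM.subsingleton_commonNeighbors hmax (hendsM j)
  refine ⟨G.ownedSubgraph ends, ownedSubgraph_le, fun i j => disjoint_edgeSet_ownedSubgraph,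
    iUnion_edgeSet_ownedSubgraph hends hcover, fun j => ?_⟩
  exact isDoubleStar_or_isTriangleStar (ownedSubgraph_adj_ends hends (hM.1 (hendsM j)))
    (fun _ => ends_mem_of_mem_edgeSet_ownedSubgraph hends)
    ((hcommon j).anti (commonNeighbors_ownedSubgraph_subset hends j))
end
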